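/- arXiv:1210.4033 — 4 statements merged into one kernel-verified Lean document; each statement's English description precedes it below -/
import Mathlib

section
/- For any real constants c₁, c₂, the function Ĝ = c₁·G₁ + c₂·G₂ is differentiable on (A, ∞) and its derivative satisfies Ĝ'(r)/[(log r)^{1+ε} + (1+ε)·(log r)^{ε}] → c₃ as r → ∞, where c₃ = c₁ + c₂·α and α = lim_{r→∞} F(r); that is, Ĝ'(r) ∼ c₃·[(log r)^{1+ε} + (1+ε)·(log r)^{ε}] as r → ∞ when c₃ ≠ 0. -/
open Real Filter intervalIntegral

/-! Differentiating the product gives `Ĝ' = c₁ G₁' + c₂ (F' G₁ + F G₁')`, and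
`G₁' r = (log r)^(1+ε) + (1+ε) (log r)^ε` is exactly the normalising factor. Hence
`Ĝ' / G₁' = c₁ + c₂ F + c₂ F' G₁ / G₁'`, where `F' G₁ = (r (log r)^(1+ε))⁻¹`, so the last term
tends to `0` and the quotient tends to `c₁ + c₂ α`. -/

theorem hasDerivAt_mul_log_rpow (p : ℝ) {r : ℝ} (hr : 1 < r) :
    HasDerivAt (fun x => x * log x ^ p) (log r ^ p + p * log r ^ (p - 1)) r := by
  have hr₀ : r ≠ 0 := (zero_lt_one.trans hr).ne'
  have hlog : HasDerivAt (fun x => log x ^ p) (r⁻¹ * p * log r ^ (p - 1)) r :=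
    (hasDerivAt_log hr₀).rpow_const (Or.inl (log_pos hr).ne')
  refine ((hasDerivAt_id' r).mul hlog).congr_deriv ?_
  field_simp

theorem tendsto_log_rpow_atTop {p : ℝ} (hp : 0 < p) :
    Tendsto (fun r => log r ^ p) atTop atTop :=
  (tendsto_rpow_atTop hp).comp tendsto_log_atTop

theorem tendsto_log_rpow_add_mul_log_rpow_atTop {ε : ℝ} (hε : 0 < ε) :
    Tendsto (fun r => log r ^ (1 + ε) + (1 + ε) * log r ^ ε) atTop atTop :=
  (tendsto_log_rpow_atTop (by linarith)).atTop_add_atTop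
    ((tendsto_log_rpow_atTop hε).const_mul_atTop (by linarith))

theorem tendsto_inv_mul_log_rpow_mul_atTop_zero {ε : ℝ} (hε : 0 < ε) :
    Tendsto (fun r => (r * log r ^ (1 + ε) * (log r ^ (1 + ε) + (1 + ε) * log r ^ ε))⁻¹)
      atTop (nhds 0) :=
  (tendsto_id.atTop_mul_atTop₀ (tendsto_log_rpow_atTop (by linarith))).atTop_mul_atTop₀
    (tendsto_log_rpow_add_mul_log_rpow_atTop hε) |>.inv_tendsto_atTop

theorem hasDerivAt_integral_of_continuousOn_Ioi {f : ℝ → ℝ} {c a r : ℝ}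
    (hf : ContinuousOn f (Set.Ioi c)) (hca : c < a) (har : a < r) :
    HasDerivAt (fun u => ∫ s in a..u, f s) (f r) r := by
  have hcr : r ∈ Set.Ioi c := hca.trans har
  refine integral_hasDerivAt_right ((hf.mono ?_).intervalIntegrable)
    (hf.stronglyMeasurableAtFilter isOpen_Ioi r hcr) (hf.continuousAt (Ioi_mem_nhds hcr))
  rw [Set.uIcc_of_le har.le]
  exact fun x hx => hca.trans_le hx.1

theorem continuousOn_inv_sq_mul_log_rpow (q : ℝ) :
    ContinuousOn (fun s => 1 / (s ^ 2 * log s ^ q)) (Set.Ioi 1) := by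
  refine continuousOn_const.div ?_ fun s (hs : 1 < s) => ?_
  · exact (continuousOn_pow 2).mul ((continuousOn_log.mono fun s (hs : 1 < s) =>
      (zero_lt_one.trans hs).ne').rpow_const fun s (hs : 1 < s) => Or.inl (log_pos hs).ne')
  · have := log_pos hs
    have := zero_lt_one.trans hs
    positivity

theorem inv_sq_mul_log_rpow_mul_mul_log_rpow {r : ℝ} (hr : 1 < r) (ε : ℝ) :
    1 / (r ^ 2 * log r ^ (2 + 2 * ε)) * (r * log r ^ (1 + ε)) = (r * log r ^ (1 + ε))⁻¹ := by
  rw [show 2 + 2 * ε = (1 + ε) + (1 + ε) by ring, rpow_add (log_pos hr)]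
  have := (zero_lt_one.trans hr).ne'
  have := (rpow_pos_of_pos (log_pos hr) (1 + ε)).ne'
  field_simp

theorem stmt_5_general (ε A : ℝ) (hε : 0 < ε) (hA : 1 < A)
    (G₁ : ℝ → ℝ) (hG₁ : ∀ r : ℝ, G₁ r = r * Real.log r ^ (1 + ε))
    (F : ℝ → ℝ)
    (hF : ∀ r : ℝ, A ≤ r → F r = ∫ s in A..r, 1 / (s ^ 2 * Real.log s ^ (2 + 2 * ε)))
    (G₂ : ℝ → ℝ) (hG₂ : ∀ r : ℝ, G₂ r = F r * G₁ r)
    (α : ℝ) (hαlim : Tendsto F atTop (nhds α))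
    (c₁ c₂ : ℝ) (Ghat : ℝ → ℝ) (hGhat : ∀ r : ℝ, Ghat r = c₁ * G₁ r + c₂ * G₂ r) :
    (∀ r : ℝ, A < r → DifferentiableAt ℝ Ghat r) ∧
      Tendsto
        (fun r : ℝ =>
          deriv Ghat r / (Real.log r ^ (1 + ε) + (1 + ε) * Real.log r ^ ε))
        atTop (nhds (c₁ + c₂ * α)) := by
  set D : ℝ → ℝ := fun r => log r ^ (1 + ε) + (1 + ε) * log r ^ ε
  set g : ℝ → ℝ := fun s => 1 / (s ^ 2 * log s ^ (2 + 2 * ε))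
  have hG₁' (r : ℝ) (hr : 1 < r) : HasDerivAt G₁ (D r) r := by
    rw [funext hG₁]
    simpa only [add_sub_cancel_left] using hasDerivAt_mul_log_rpow (1 + ε) hr
  have hF' (r : ℝ) (hr : A < r) : HasDerivAt F (g r) r :=
    (hasDerivAt_integral_of_continuousOn_Ioi (continuousOn_inv_sq_mul_log_rpow _) hA hr)
      |>.congr_of_eventuallyEq <| eventually_of_mem (Ioi_mem_nhds hr) fun x hx => hF x hx.le
  have hGhat' (r : ℝ) (hr : A < r) :
      HasDerivAt Ghat (c₁ * D r + c₂ * (g r * G₁ r + F r * D r)) r := by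
    rw [funext hGhat, funext hG₂]
    exact ((hG₁' r (hA.trans hr)).const_mul c₁).add
      (((hF' r hr).mul (hG₁' r (hA.trans hr))).const_mul c₂)
  refine ⟨fun r hr => (hGhat' r hr).differentiableAt, ?_⟩
  have hD : Tendsto D atTop atTop := tendsto_log_rpow_add_mul_log_rpow_atTop hε
  have hlim := ((hαlim.const_mul c₂).const_add c₁).add
    ((tendsto_inv_mul_log_rpow_mul_atTop_zero hε).const_mul c₂)
  rw [mul_zero, add_zero] at hlim
  refine hlim.congr' ?_
  filter_upwards [eventually_gt_atTop A, hD.eventually_gt_atTop 0] with r hr hDr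
  rw [(hGhat' r hr).deriv, hG₁ r, inv_sq_mul_log_rpow_mul_mul_log_rpow (hA.trans hr)]
  simp only [D] at hDr ⊢
  field_simp
  ring

/-- For any real constants `c₁, c₂`, the function `Ĝ = c₁ G₁ + c₂ G₂` is
differentiable on `(A, ∞)` and its derivative satisfies
`Ĝ' r / ((log r)^(1+ε) + (1+ε) (log r)^ε) → c₃` as `r → ∞`, where
`c₃ = c₁ + c₂ α` and `α = lim_{r→∞} F r`. -/
theorem stmt_5 (ε A : ℝ) (hε : 0 < ε) (hA : 1 < A)
    (G₁ : ℝ → ℝ) (hG₁ : ∀ r : ℝ, G₁ r = r * Real.log r ^ (1 + ε))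
    (F : ℝ → ℝ)
    (hF : ∀ r : ℝ, A ≤ r → F r = ∫ s in A..r, 1 / (s ^ 2 * Real.log s ^ (2 + 2 * ε)))
    (G₂ : ℝ → ℝ) (hG₂ : ∀ r : ℝ, G₂ r = F r * G₁ r)
    (α : ℝ) (hα : 0 < α) (hαlim : Tendsto F atTop (nhds α))
    (c₁ c₂ : ℝ) (Ghat : ℝ → ℝ) (hGhat : ∀ r : ℝ, Ghat r = c₁ * G₁ r + c₂ * G₂ r) :
    (∀ r : ℝ, A < r → DifferentiableAt ℝ Ghat r) ∧
      Tendsto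
        (fun r : ℝ =>
          deriv Ghat r / (Real.log r ^ (1 + ε) + (1 + ε) * Real.log r ^ ε))
        atTop (nhds (c₁ + c₂ * α)) :=
  stmt_5_general ε A hε hA G₁ hG₁ F hF G₂ hG₂ α hαlim c₁ c₂ Ghat hGhat
end

section
/- Let c₁, c₂ be real constants with c₃ = c₁ + c₂·α > 0, where α = lim_{r→∞} F(r), and set Ǧ = c₁·G₁ + c₂·G₂. Then there exists B > A such that for all r ≥ B, Ǧ(r) > 0 and Ǧ'(r)/Ǧ(r) ≤ (5/4)·(1/r)·[1 + 1/(2·log r) + 1/(2·log r·(log log r))]. -/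
open Real Filter intervalIntegral Topology Set

/-! Writing `Ǧ = P · G₁` with `P = c₁ + c₂ F`, the logarithmic derivative splits as
`Ǧ'/Ǧ = P'/P + G₁'/G₁`. The second term is exactly `(1/r)[1 + 1/(2 log r) + 1/(2 log r log log r)]`,
while `P' = c₂ / (r² log r log log r)` and `P → c₃ > 0`, so `r · P'/P → 0`; eventually the first
term is below `1/(4r)`, which the bracket (at least `1`) absorbs. -/

noncomputable def sqrtLogWeight (r : ℝ) : ℝ :=
  r * log r ^ ((1 : ℝ) / 2) * log (log r) ^ ((1 : ℝ) / 2)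

noncomputable def invSqMulLogMulLogLog (s : ℝ) : ℝ :=
  1 / (s ^ 2 * log s * log (log s))

section

variable {r : ℝ}

lemma one_lt_log_of_exp_one_lt (hr : exp 1 < r) : 1 < log r := by
  simpa using log_lt_log (exp_pos 1) hr

lemma sqrtLogWeight_pos (hr : exp 1 < r) : 0 < sqrtLogWeight r := by
  have hL := one_lt_log_of_exp_one_lt hr
  have hr0 : 0 < r := (exp_pos 1).trans hr
  have hLL : 0 < log (log r) := log_pos hL
  unfold sqrtLogWeight
  positivity

lemma hasDerivAt_sqrtLogWeight (hr : exp 1 < r) :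
    HasDerivAt sqrtLogWeight (sqrtLogWeight r *
      (1 / r * (1 + 1 / (2 * log r) + 1 / (2 * log r * log (log r))))) r := by
  have hr0 : 0 < r := (exp_pos 1).trans hr
  have hL := one_lt_log_of_exp_one_lt hr
  have hL0 : 0 < log r := one_pos.trans hL
  have hLL0 : 0 < log (log r) := log_pos hL
  have hlog : HasDerivAt log r⁻¹ r := hasDerivAt_log hr0.ne'
  have hloglog : HasDerivAt (fun x => log (log x)) ((log r)⁻¹ * r⁻¹) r :=
    (hasDerivAt_log hL0.ne').comp r hlog
  refine (((hasDerivAt_id' r).mul (hlog.rpow_const (p := 1 / 2) (Or.inl hL0.ne'))).mul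
    (hloglog.rpow_const (p := 1 / 2) (Or.inl hLL0.ne'))).congr_deriv ?_
  rw [rpow_sub hL0, rpow_sub hLL0, rpow_one, rpow_one, sqrtLogWeight, Pi.mul_apply]
  field_simp

lemma logDeriv_sqrtLogWeight (hr : exp 1 < r) :
    logDeriv sqrtLogWeight r = 1 / r * (1 + 1 / (2 * log r) + 1 / (2 * log r * log (log r))) := by
  rw [logDeriv_apply, (hasDerivAt_sqrtLogWeight hr).deriv,
    mul_div_cancel_left₀ _ (sqrtLogWeight_pos hr).ne']

end

lemma continuousOn_invSqMulLogMulLogLog :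
    ContinuousOn invSqMulLogMulLogLog (Ioi (exp 1)) := by
  intro s hs
  have hs0 : 0 < s := (exp_pos 1).trans hs
  have hL := one_lt_log_of_exp_one_lt hs
  have hLL0 : 0 < log (log s) := log_pos hL
  have hden : ContinuousAt (fun s : ℝ => s ^ 2 * log s * log (log s)) s := by
    have hL0 : log s ≠ 0 := (one_pos.trans hL).ne'
    fun_prop (disch := assumption)
  exact (continuousAt_const.div hden (by positivity)).continuousWithinAt

lemma hasDerivAt_integral_invSqMulLogMulLogLog {A r : ℝ} (hA : exp 1 < A) (hr : exp 1 < r) :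
    HasDerivAt (fun x => ∫ s in A..x, invSqMulLogMulLogLog s) (invSqMulLogMulLogLog r) r := by
  have hsub : uIcc A r ⊆ Ioi (exp 1) := fun x hx => lt_min hA hr |>.trans_le hx.1
  exact integral_hasDerivAt_right
    ((continuousOn_invSqMulLogMulLogLog.mono hsub).intervalIntegrable)
    (continuousOn_invSqMulLogMulLogLog.stronglyMeasurableAtFilter isOpen_Ioi r hr)
    (continuousOn_invSqMulLogMulLogLog.continuousAt (Ioi_mem_nhds hr))

lemma tendsto_mul_invSqMulLogMulLogLog_atTop :
    Tendsto (fun r => r * invSqMulLogMulLogLog r) atTop (𝓝 0) := by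
  have h : Tendsto (fun r => r * log r * log (log r)) atTop atTop :=
    (tendsto_id.atTop_mul_atTop₀ tendsto_log_atTop).atTop_mul_atTop₀
      (tendsto_log_atTop.comp tendsto_log_atTop)
  refine h.inv_tendsto_atTop.congr' ?_
  filter_upwards [eventually_gt_atTop 0] with r hr
  simp only [invSqMulLogMulLogLog, Pi.inv_apply]
  field_simp

lemma eventually_pos_and_logDeriv_lt_of_tendsto {P p : ℝ → ℝ} {c ε : ℝ}
    (hP : Tendsto P atTop (𝓝 c)) (hc : 0 < c) (hderiv : ∀ᶠ r in atTop, HasDerivAt P (p r) r)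
    (hp : Tendsto (fun r => r * p r) atTop (𝓝 0)) (hε : 0 < ε) :
    ∀ᶠ r in atTop, 0 < P r ∧ logDeriv P r < ε / r := by
  have hratio : Tendsto (fun r => r * p r / P r) atTop (𝓝 0) := by
    have h := hp.div hP hc.ne'
    rwa [zero_div] at h
  filter_upwards [hderiv, hP.eventually (eventually_gt_nhds hc),
    hratio.eventually (eventually_lt_nhds hε), eventually_gt_atTop 0] with r hd hP_pos hsmall hr
  refine ⟨hP_pos, ?_⟩
  rw [logDeriv_apply, hd.deriv, lt_div_iff₀ hr]
  rwa [mul_div_assoc, mul_comm] at hsmall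

theorem stmt_13_general (A : ℝ) (hA : Real.exp 1 < A)
    (G₁ : ℝ → ℝ)
    (hG₁ : ∀ r : ℝ,
      G₁ r = r * Real.log r ^ ((1 : ℝ) / 2) * Real.log (Real.log r) ^ ((1 : ℝ) / 2))
    (F : ℝ → ℝ)
    (hF : ∀ r : ℝ, A ≤ r →
      F r = ∫ s in A..r, 1 / (s ^ 2 * Real.log s * Real.log (Real.log s)))
    (G₂ : ℝ → ℝ) (hG₂ : ∀ r : ℝ, G₂ r = F r * G₁ r)
    (α : ℝ) (hαlim : Tendsto F atTop (nhds α))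
    (c₁ c₂ : ℝ) (hc₃ : 0 < c₁ + c₂ * α)
    (Gcheck : ℝ → ℝ) (hGcheck : ∀ r : ℝ, Gcheck r = c₁ * G₁ r + c₂ * G₂ r) :
    ∃ B : ℝ, A < B ∧ ∀ r : ℝ, B ≤ r →
      0 < Gcheck r ∧
        deriv Gcheck r / Gcheck r
          ≤ 5 / 4 * (1 / r) *
              (1 + 1 / (2 * Real.log r) +
                1 / (2 * Real.log r * Real.log (Real.log r))) := by
  set P : ℝ → ℝ := fun r => c₁ + c₂ * F r
  have hGcheck_eq : Gcheck = fun r => P r * sqrtLogWeight r := by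
    funext r; rw [hGcheck, hG₂, hG₁, sqrtLogWeight]; ring
  have hP_deriv : ∀ᶠ r in atTop, HasDerivAt P (c₂ * invSqMulLogMulLogLog r) r := by
    filter_upwards [eventually_gt_atTop A] with r hr
    refine ((hasDerivAt_integral_invSqMulLogMulLogLog hA (hA.trans hr)).const_mul c₂).const_add c₁
      |>.congr_of_eventuallyEq ?_
    filter_upwards [Ioi_mem_nhds hr] with x hx
    simp only [P, hF x (le_of_lt hx), invSqMulLogMulLogLog]
  have hP_small := eventually_pos_and_logDeriv_lt_of_tendsto
    ((hαlim.const_mul c₂).const_add c₁) hc₃ hP_deriv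
    (by simpa [mul_left_comm] using tendsto_mul_invSqMulLogMulLogLog_atTop.const_mul c₂)
    (by norm_num : (0 : ℝ) < 1 / 4)
  obtain ⟨B, hB⟩ := eventually_atTop.1 <| hP_deriv.and <| hP_small.and (eventually_gt_atTop A)
  refine ⟨max B (A + 1), by linarith [le_max_right B (A + 1)], fun r hr => ?_⟩
  obtain ⟨hP_hasDeriv, ⟨hP_pos, hlogDeriv_P⟩, hrA⟩ := hB r (le_of_max_le_left hr)
  have hre : exp 1 < r := hA.trans hrA
  have hr0 : 0 < r := (exp_pos 1).trans hre
  have hL0 : 0 < log r := one_pos.trans (one_lt_log_of_exp_one_lt hre)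
  have hLL0 : 0 < log (log r) := log_pos (one_lt_log_of_exp_one_lt hre)
  have hW := sqrtLogWeight_pos hre
  rw [hGcheck_eq]
  refine ⟨mul_pos hP_pos hW, ?_⟩
  rw [← logDeriv_apply, logDeriv_mul r hP_pos.ne' hW.ne' hP_hasDeriv.differentiableAt
    (hasDerivAt_sqrtLogWeight hre).differentiableAt, logDeriv_sqrtLogWeight hre]
  have : 0 ≤ 1 / r * (1 / (2 * log r) + 1 / (2 * log r * log (log r))) := by positivity
  linarith [show 1 / 4 / r = 1 / 4 * (1 / r) by ring]

/-- Let `c₃ = c₁ + c₂ α > 0`, where `α = lim_{r→∞} F r`, and set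
`Ǧ = c₁ G₁ + c₂ G₂`. Then there exists `B > A` such that for all `r ≥ B`,
`Ǧ r > 0` and `Ǧ' r / Ǧ r ≤ (5/4) (1/r) [1 + 1/(2 log r) + 1/(2 log r log log r)]`. -/
theorem stmt_13 (A : ℝ) (hA : Real.exp 1 < A)
    (G₁ : ℝ → ℝ)
    (hG₁ : ∀ r : ℝ,
      G₁ r = r * Real.log r ^ ((1 : ℝ) / 2) * Real.log (Real.log r) ^ ((1 : ℝ) / 2))
    (F : ℝ → ℝ)
    (hF : ∀ r : ℝ, A ≤ r →
      F r = ∫ s in A..r, 1 / (s ^ 2 * Real.log s * Real.log (Real.log s)))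
    (G₂ : ℝ → ℝ) (hG₂ : ∀ r : ℝ, G₂ r = F r * G₁ r)
    (α : ℝ) (hα : 0 < α) (hαlim : Tendsto F atTop (nhds α))
    (c₁ c₂ : ℝ) (hc₃ : 0 < c₁ + c₂ * α)
    (Gcheck : ℝ → ℝ) (hGcheck : ∀ r : ℝ, Gcheck r = c₁ * G₁ r + c₂ * G₂ r) :
    ∃ B : ℝ, A < B ∧ ∀ r : ℝ, B ≤ r →
      0 < Gcheck r ∧
        deriv Gcheck r / Gcheck r
          ≤ 5 / 4 * (1 / r) *
              (1 + 1 / (2 * Real.log r) +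
                1 / (2 * Real.log r * Real.log (Real.log r))) :=
  stmt_13_general A hA G₁ hG₁ F hF G₂ hG₂ α hαlim c₁ c₂ hc₃ Gcheck hGcheck
end

section
/- Let ε > 0 be real, let r > 1 be real, let φ be real, and let v be a real number satisfying v ≥ (1 + sin²φ)·(1/(2r) + (1+ε)/(2·r·log r)). Then (ε/(r·(log r)^{1+ε}))·[ (cos²φ/(2r))·((1+ε)/(log r) + 1) − v ] ≤ (ε/(2·r²·(log r)^{1+ε}))·(1 + (1+ε)/(log r))·(cos²φ − sin²φ − 1) ≤ 0. -/
open Real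

/-
The drift is affine and decreasing in `v`, so it suffices to evaluate it at the threshold value
of `v`. There the bracket factors as `(1 + (1+ε)/log r)/(2r)` times
`cos²φ - (1 + sin²φ) = -2 sin²φ ≤ 0`.
-/

theorem cos_sq_sub_sin_sq_sub_one_nonpos (φ : ℝ) : cos φ ^ 2 - sin φ ^ 2 - 1 ≤ 0 := by
  nlinarith [sin_sq_add_cos_sq φ, sq_nonneg (sin φ)]

theorem drift_at_threshold_eq (ε r L P φ : ℝ) :
    ε / (r * P) * (cos φ ^ 2 / (2 * r) * ((1 + ε) / L + 1)
        - (1 + sin φ ^ 2) * (1 / (2 * r) + (1 + ε) / (2 * r * L)))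
      = ε / (2 * r ^ 2 * P) * (1 + (1 + ε) / L) * (cos φ ^ 2 - sin φ ^ 2 - 1) := by
  field_simp
  ring

/-- Key drift computation for the `n = 2` case of Theorem 3.1: if
`v ≥ (1 + sin²φ) (1/(2r) + (1+ε)/(2 r log r))` then
`(ε/(r (log r)^(1+ε))) [(cos²φ/(2r)) ((1+ε)/log r + 1) − v]
  ≤ (ε/(2 r² (log r)^(1+ε))) (1 + (1+ε)/log r) (cos²φ − sin²φ − 1) ≤ 0`. -/
theorem stmt_14 (ε r φ v : ℝ) (hε : 0 < ε) (hr : 1 < r)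
    (hv : v ≥ (1 + Real.sin φ ^ 2) * (1 / (2 * r) + (1 + ε) / (2 * r * Real.log r))) :
    (ε / (r * Real.log r ^ (1 + ε))) *
        (Real.cos φ ^ 2 / (2 * r) * ((1 + ε) / Real.log r + 1) - v)
      ≤ (ε / (2 * r ^ 2 * Real.log r ^ (1 + ε))) * (1 + (1 + ε) / Real.log r) *
          (Real.cos φ ^ 2 - Real.sin φ ^ 2 - 1) ∧
    (ε / (2 * r ^ 2 * Real.log r ^ (1 + ε))) * (1 + (1 + ε) / Real.log r) *
        (Real.cos φ ^ 2 - Real.sin φ ^ 2 - 1) ≤ 0 := by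
  have hlog : 0 < log r := log_pos hr
  constructor
  · rw [← drift_at_threshold_eq ε r (log r) _ φ]
    gcongr
  · exact mul_nonpos_of_nonneg_of_nonpos (by positivity) (cos_sq_sub_sin_sq_sub_one_nonpos φ)
end

section
/- For every real a > 0 there exists a real B > 0 such that for all real r ≥ B, all real φ, and all real v satisfying v ≥ (1 + sin²φ)·(a/2)·(cosh(a·r)/sinh(a·r)), one has v/r² − cos²φ/r³ > 1/(sinh(a·r))². -/
open Real Filter Topology

/-!
Multiplying by `r²`, the claim reads `v - cos²φ / r > (r / sinh (a r))²`. Since `coth ≥ 1` the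
left side is at least `a / 2 - 1 / r → a / 2 > 0`, while `sinh (a r) ≥ (a r)² / 4` forces the
right side to `0`.
-/

lemma Real.sq_div_four_le_sinh {x : ℝ} (hx : 0 ≤ x) : x ^ 2 / 4 ≤ sinh x := by
  have hexp := quadratic_le_exp_of_nonneg hx
  have hexp_neg : exp (-x) ≤ 1 := exp_le_one_iff.mpr (neg_nonpos.mpr hx)
  rw [sinh_eq]
  linarith

lemma Real.one_le_cosh_div_sinh {x : ℝ} (hx : 0 < x) : 1 ≤ cosh x / sinh x :=
  (one_le_div (sinh_pos_iff.mpr hx)).mpr (sinh_lt_cosh x).le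

lemma tendsto_div_sinh_mul_atTop {a : ℝ} (ha : 0 < a) :
    Tendsto (fun r => r / sinh (a * r)) atTop (𝓝 0) := by
  have hbound : Tendsto (fun r : ℝ => 4 / a ^ 2 * r⁻¹) atTop (𝓝 0) := by
    simpa only [mul_zero] using (tendsto_inv_atTop_zero (𝕜 := ℝ)).const_mul (4 / a ^ 2)
  refine tendsto_of_tendsto_of_tendsto_of_le_of_le' tendsto_const_nhds hbound ?_ ?_
  all_goals
    filter_upwards [eventually_gt_atTop 0] with r hr
    have hs : 0 < sinh (a * r) := sinh_pos_iff.mpr (mul_pos ha hr)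
  · positivity
  · rw [div_le_iff₀ hs]
    calc r = 4 / a ^ 2 * r⁻¹ * ((a * r) ^ 2 / 4) := by field_simp
      _ ≤ 4 / a ^ 2 * r⁻¹ * sinh (a * r) := by gcongr; exact sq_div_four_le_sinh (by positivity)

lemma div_sq_sub_div_cube_gt {r s v c : ℝ} (hr : 0 < r) (hs : 0 < s) (hc : c ≤ 1)
    (h : (r / s) ^ 2 < v - 1 / r) :
    v / r ^ 2 - c / r ^ 3 > 1 / s ^ 2 := by
  have hc' : c / r ^ 3 ≤ 1 / r ^ 3 := by gcongr
  calc 1 / s ^ 2 = (r / s) ^ 2 / r ^ 2 := by field_simp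
    _ < (v - 1 / r) / r ^ 2 := by gcongr
    _ = v / r ^ 2 - 1 / r ^ 3 := by field_simp
    _ ≤ v / r ^ 2 - c / r ^ 3 := by linarith

/-- Key drift computation in the proof of the first part of Theorem 5.1: for
every `a > 0` there exists `B > 0` such that for all `r ≥ B`, all `φ`, and all
`v ≥ (1 + sin²φ) (a/2) (cosh (a r)/sinh (a r))`, one has
`v/r² − cos²φ/r³ > 1/(sinh (a r))²`. -/
theorem stmt_17 (a : ℝ) (ha : 0 < a) :
    ∃ B : ℝ, 0 < B ∧ ∀ r : ℝ, B ≤ r → ∀ φ v : ℝ,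
      v ≥ (1 + Real.sin φ ^ 2) * (a / 2) * (Real.cosh (a * r) / Real.sinh (a * r)) →
      v / r ^ 2 - Real.cos φ ^ 2 / r ^ 3 > 1 / Real.sinh (a * r) ^ 2 := by
  have hlim : Tendsto (fun r : ℝ => a / 2 - 1 / r) atTop (𝓝 (a / 2)) := by
    simpa using (tendsto_const_nhds (x := a / 2)).sub
      ((tendsto_const_nhds (x := (1 : ℝ))).div_atTop tendsto_id)
  obtain ⟨B, hB⟩ := eventually_atTop.mp
    (((tendsto_div_sinh_mul_atTop ha).pow 2).eventually_lt hlim (by simpa using ha))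
  refine ⟨max B 1, by positivity, fun r hr φ v hv => ?_⟩
  have hr0 : 0 < r := by linarith [le_max_right B 1]
  have hv_half : a / 2 ≤ v :=
    calc a / 2 = 1 * (a / 2) * 1 := by ring
      _ ≤ (1 + sin φ ^ 2) * (a / 2) * (cosh (a * r) / sinh (a * r)) := by
        gcongr
        · linarith [sq_nonneg (sin φ)]
        · exact one_le_cosh_div_sinh (mul_pos ha hr0)
      _ ≤ v := hv
  refine div_sq_sub_div_cube_gt hr0 (sinh_pos_iff.mpr (mul_pos ha hr0)) (cos_sq_le_one φ) ?_
  linarith [hB r (le_of_max_le_left hr)]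
end
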